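/- arXiv:2410.04640 — 3 statements merged into one kernel-verified Lean document; each statement's English description precedes it below -/
import Mathlib

section
/- Let (Ω, F, P) be a probability space, let (T, 𝒯) be a measurable space (of trajectories), and let τ¹, …, τ^M, τ : Ω → T be independent and identically distributed T-valued random variables. Let N ∈ ℕ, let J : T → ℕ be measurable with J(t) ≤ N for all t ∈ T (the number of policy-inference steps of a trajectory), and for each i ∈ ℕ let dᵢ : T → ℝ be measurable with dᵢ(t) ≥ 0 for all t ∈ T (the per-step statistical distances). Define the cumulative temporal consistency score η_j(t) := Σ_{i<j} dᵢ(t) and the terminal score η(t) := η_{J(t)}(t). Let δ ∈ (0,1) satisfy ⌈(M+1)(1−δ)⌉ ≤ M, and let γ : Ω → ℝ be the (random) conformal quantile of the calibration scores sᵢ := η(τⁱ), namely γ := inf{ξ ∈ ℝ : #{i ∈ {1,…,M} : sᵢ ≤ ξ} ≥ ⌈(M+1)(1−δ)⌉}. Then the false positive rate is at most δ: P(∃ j with 0 ≤ j ≤ J(τ) such that η_j(τ) > γ) ≤ δ. -/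
/-!
The cumulative score is monotone in the step, so a warning is raised exactly when the terminal
score of the test trajectory exceeds `γ`, and then at least `k := ⌈(M+1)(1-δ)⌉` calibration
scores lie strictly below it. The `M + 1` terminal scores are i.i.d., hence exchangeable, so this
event has the same probability for each of the `M + 1` positions of the test score; but in any
configuration at most `M + 1 - k` positions have `k` scores strictly below them. Hence the
probability is at most `(M + 1 - k) / (M + 1) ≤ δ`.
-/

open MeasureTheory ProbabilityTheory Finset

open scoped ENNReal

section StrictRank

variable {ι α : Type*} [Fintype ι] [LinearOrder α]

def strictRank (x : ι → α) (j : ι) : ℕ := #{i | x i < x j}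

lemma strictRank_comp_perm (x : ι → α) (e : Equiv.Perm ι) (j : ι) :
    strictRank (x ∘ e) j = strictRank x (e j) :=
  card_equiv e (by simp)

lemma card_filter_le_strictRank_le (x : ι → α) (k : ℕ) :
    #{j | k ≤ strictRank x j} ≤ Fintype.card ι - k := by
  classical
  obtain hG | hG := (univ.filter fun j => k ≤ strictRank x j).eq_empty_or_nonempty
  · simp [hG]
  -- by minimality of `x j₀`, no index counted in `strictRank x j₀` lies in the filter
  obtain ⟨j₀, hj₀, hmin⟩ := exists_min_image _ x hG
  have hsub : ({j | k ≤ strictRank x j} : Finset ι) ⊆ ({i | x i < x j₀} : Finset ι)ᶜ := by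
    intro j hj
    simpa using hmin j hj
  calc #{j | k ≤ strictRank x j} ≤ #({i | x i < x j₀} : Finset ι)ᶜ := card_le_card hsub
    _ = Fintype.card ι - strictRank x j₀ := card_compl _
    _ ≤ Fintype.card ι - k := Nat.sub_le_sub_left (mem_filter.1 hj₀).2 _

end StrictRank

lemma map_perm_eq_of_iIndepFun_identDistrib {Ω ι β : Type*} [MeasurableSpace Ω]
    [MeasurableSpace β] [Fintype ι] {P : Measure Ω} {X : ι → Ω → β}
    (hX : ∀ i, Measurable (X i)) (hind : iIndepFun X P)
    (hid : ∀ i j, IdentDistrib (X i) (X j) P P) (e : Equiv.Perm ι) :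
    P.map (fun ω i => X (e i) ω) = P.map (fun ω i => X i ω) := by
  rw [(hind.precomp e.injective).map_fun_eq_pi_map fun i => (hX (e i)).aemeasurable,
    hind.map_fun_eq_pi_map fun i => (hX i).aemeasurable]
  exact congrArg Measure.pi (funext fun i => (hid (e i) i).map_eq)

section Exchangeability

variable {Ω ι α : Type*} [MeasurableSpace Ω] [Fintype ι]
  [LinearOrder α] [TopologicalSpace α] [OrderClosedTopology α] [SecondCountableTopology α]
  [MeasurableSpace α] [OpensMeasurableSpace α]

lemma measurable_strictRank (j : ι) : Measurable fun x : ι → α => strictRank x j := by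
  simp only [strictRank, card_filter]
  exact Finset.measurable_sum _ fun i _ => Measurable.ite
    (measurableSet_lt (measurable_pi_apply i) (measurable_pi_apply j)) measurable_const
    measurable_const

variable {P : Measure Ω} {X : ι → Ω → α}

lemma measure_le_strictRank_eq_of_iIndepFun (hX : ∀ i, Measurable (X i)) (hind : iIndepFun X P)
    (hid : ∀ i j, IdentDistrib (X i) (X j) P P) (k : ℕ) (c c' : ι) :
    P {ω | k ≤ strictRank (X · ω) c} = P {ω | k ≤ strictRank (X · ω) c'} := by
  classical
  set e := Equiv.swap c' c
  have hA : MeasurableSet {x : ι → α | k ≤ strictRank x c'} :=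
    measurable_strictRank c' measurableSet_Ici
  have hc : {ω | k ≤ strictRank (X · ω) c} =
      (fun ω i => X (e i) ω) ⁻¹' {x | k ≤ strictRank x c'} := by
    ext ω
    change _ ↔ k ≤ strictRank ((X · ω) ∘ e) c'
    rw [strictRank_comp_perm, Equiv.swap_apply_left]
    rfl
  rw [hc, ← Measure.map_apply (measurable_pi_lambda _ fun i => hX (e i)) hA,
    map_perm_eq_of_iIndepFun_identDistrib hX hind hid,
    Measure.map_apply (measurable_pi_lambda _ hX) hA]
  rfl

lemma card_mul_measure_le_strictRank_le [IsProbabilityMeasure P] (hX : ∀ i, Measurable (X i))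
    (hind : iIndepFun X P) (hid : ∀ i j, IdentDistrib (X i) (X j) P P) (k : ℕ) (c : ι) :
    Fintype.card ι * P {ω | k ≤ strictRank (X · ω) c} ≤ (Fintype.card ι - k : ℕ) := by
  classical
  have hA : ∀ j, MeasurableSet {ω | k ≤ strictRank (X · ω) j} := fun j =>
    (measurable_strictRank j).comp (measurable_pi_lambda _ hX) measurableSet_Ici
  calc Fintype.card ι * P {ω | k ≤ strictRank (X · ω) c}
      = ∑ j, P {ω | k ≤ strictRank (X · ω) j} := by
        simp [measure_le_strictRank_eq_of_iIndepFun hX hind hid k _ c]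
    _ = ∫⁻ ω, (#{j | k ≤ strictRank (X · ω) j} : ℝ≥0∞) ∂P := by
        simp_rw [← lintegral_indicator_one (hA _)]
        rw [← lintegral_finsetSum _ fun j _ => measurable_one.indicator (hA j)]
        congr with ω
        simp [Set.indicator_apply]
    _ ≤ ∫⁻ _, ((Fintype.card ι - k : ℕ) : ℝ≥0∞) ∂P :=
        lintegral_mono fun ω => Nat.cast_le.2 (card_filter_le_strictRank_le (X · ω) k)
    _ = (Fintype.card ι - k : ℕ) := by simp

end Exchangeability

lemma le_strictRank_last_of_sInf_lt {α : Type*} [ConditionallyCompleteLinearOrder α] {n k : ℕ}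
    (hk : k ≤ n) (x : Fin (n + 1) → α)
    (h : sInf {ξ | k ≤ #{i : Fin n | x i.castSucc ≤ ξ}} < x (Fin.last n)) :
    k ≤ strictRank x (Fin.last n) := by
  obtain ⟨b, hb⟩ := (Set.finite_range fun i : Fin n => x i.castSucc).bddAbove
  have hne : {ξ | k ≤ #{i : Fin n | x i.castSucc ≤ ξ}}.Nonempty :=
    ⟨b, by simpa [filter_true_of_mem fun i _ => hb (Set.mem_range_self i)] using hk⟩
  obtain ⟨ξ, hξ, hξlt⟩ := exists_lt_of_csInf_lt hne h
  calc k ≤ #{i : Fin n | x i.castSucc ≤ ξ} := hξ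
    _ ≤ strictRank x (Fin.last n) :=
      card_le_card_of_injOn Fin.castSucc
        (fun i hi => by simpa using (mem_filter.1 hi).2.trans_lt hξlt)
        (Fin.castSucc_injective n).injOn

lemma le_ofReal_of_natCast_mul_le {n k : ℕ} {δ : ℝ} {p : ℝ≥0∞} (hn : n ≠ 0)
    (hk : k ≤ n) (hkδ : n * (1 - δ) ≤ k) (hp : n * p ≤ (n - k : ℕ)) :
    p ≤ ENNReal.ofReal δ := by
  have hsub : ((n - k : ℕ) : ℝ≥0∞) ≤ n * ENNReal.ofReal δ := by
    rw [← ENNReal.ofReal_natCast, ← ENNReal.ofReal_natCast n,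
      ← ENNReal.ofReal_mul (Nat.cast_nonneg n)]
    refine ENNReal.ofReal_le_ofReal ?_
    push_cast [Nat.cast_sub hk]
    linarith
  exact (ENNReal.mul_le_mul_iff_right (by exact_mod_cast hn) (ENNReal.natCast_ne_top n)).1
    (hp.trans hsub)

theorem stac_false_positive_rate_le_general
    {Ω : Type*} [MeasurableSpace Ω] (P : Measure Ω) [IsProbabilityMeasure P]
    {T : Type*} [MeasurableSpace T]
    (M : ℕ) (τ : Fin (M + 1) → Ω → T)
    (hτmeas : ∀ i, Measurable (τ i))
    (hindep : iIndepFun τ P)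
    (hid : ∀ i j, IdentDistrib (τ i) (τ j) P P)
    (J : T → ℕ) (hJmeas : Measurable J)
    (d : ℕ → T → ℝ) (hdmeas : ∀ i, Measurable (d i)) (hd0 : ∀ i t, 0 ≤ d i t)
    (η : ℕ → T → ℝ) (hη : ∀ j t, η j t = ∑ i ∈ Finset.range j, d i t)
    (δ : ℝ)
    (hk : ⌈(M + 1 : ℝ) * (1 - δ)⌉₊ ≤ M)
    (γ : Ω → ℝ)
    (hγ : ∀ ω, γ ω =
      sInf {ξ : ℝ | ⌈(M + 1 : ℝ) * (1 - δ)⌉₊ ≤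
        (Finset.univ.filter (fun i : Fin M =>
          η (J (τ i.castSucc ω)) (τ i.castSucc ω) ≤ ξ)).card}) :
    P {ω | ∃ j ≤ J (τ (Fin.last M) ω), γ ω < η j (τ (Fin.last M) ω)}
      ≤ ENNReal.ofReal δ := by
  set k := ⌈(M + 1 : ℝ) * (1 - δ)⌉₊
  have hη_mono : ∀ t, Monotone (η · t) := fun t j j' hjj' => by
    simp only [hη]
    exact sum_le_sum_of_subset_of_nonneg (range_mono hjj') fun i _ _ => hd0 i t
  have hη_meas : ∀ j, Measurable (η j) := fun j => by
    simp only [funext (hη j)]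
    exact Finset.measurable_sum _ fun i _ => hdmeas i
  have hscore : Measurable fun t => η (J t) t :=
    (measurable_from_prod_countable_left (f := fun p : T × ℕ => η p.2 p.1) hη_meas).comp
      (measurable_id.prodMk hJmeas)
  set X : Fin (M + 1) → Ω → ℝ := fun i ω => η (J (τ i ω)) (τ i ω)
  have hevent : {ω | ∃ j ≤ J (τ (Fin.last M) ω), γ ω < η j (τ (Fin.last M) ω)} ⊆
      {ω | k ≤ strictRank (X · ω) (Fin.last M)} := by
    rintro ω ⟨j, hj, hγj⟩
    exact le_strictRank_last_of_sInf_lt hk (X · ω) (hγ ω ▸ hγj.trans_le (hη_mono _ hj))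
  have hrank := card_mul_measure_le_strictRank_le (fun i => hscore.comp (hτmeas i))
    (hindep.comp _ fun _ => hscore) (fun i j => (hid i j).comp hscore) k (Fin.last M)
  rw [Fintype.card_fin] at hrank
  refine (measure_mono hevent).trans
    (le_ofReal_of_natCast_mul_le M.succ_ne_zero (hk.trans M.le_succ) ?_ hrank)
  simpa using Nat.le_ceil ((M + 1 : ℝ) * (1 - δ))

/-- STAC has low false positive rate. Trajectories
`τ 0, …, τ (M-1)` (calibration, `τ i.castSucc` for `i : Fin M`) and
`τ (Fin.last M)` (test) are i.i.d. `T`-valued random variables. `J t ≤ N` is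
the number of policy-inference steps of trajectory `t`, `d i t ≥ 0` are the
per-step statistical distances, and the cumulative temporal consistency score
is `η j t = ∑_{i<j} d i t`, with terminal score `η (J t) t`. With
`δ ∈ (0,1)`, `⌈(M+1)(1-δ)⌉ ≤ M`, and `γ ω` the conformal quantile of the
calibration terminal scores, the probability that the cumulative score of the
test trajectory exceeds `γ` at some step `j ≤ J` is at most `δ`. -/
theorem stac_false_positive_rate_le
    {Ω : Type*} [MeasurableSpace Ω] (P : Measure Ω) [IsProbabilityMeasure P]
    {T : Type*} [MeasurableSpace T]
    (M : ℕ) (τ : Fin (M + 1) → Ω → T)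
    (hτmeas : ∀ i, Measurable (τ i))
    (hindep : iIndepFun τ P)
    (hid : ∀ i j, IdentDistrib (τ i) (τ j) P P)
    (N : ℕ) (J : T → ℕ) (hJmeas : Measurable J) (hJle : ∀ t, J t ≤ N)
    (d : ℕ → T → ℝ) (hdmeas : ∀ i, Measurable (d i)) (hd0 : ∀ i t, 0 ≤ d i t)
    (η : ℕ → T → ℝ) (hη : ∀ j t, η j t = ∑ i ∈ Finset.range j, d i t)
    (δ : ℝ) (hδ : δ ∈ Set.Ioo (0 : ℝ) 1)
    (hk : ⌈(M + 1 : ℝ) * (1 - δ)⌉₊ ≤ M)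
    (γ : Ω → ℝ)
    (hγ : ∀ ω, γ ω =
      sInf {ξ : ℝ | ⌈(M + 1 : ℝ) * (1 - δ)⌉₊ ≤
        (Finset.univ.filter (fun i : Fin M =>
          η (J (τ i.castSucc ω)) (τ i.castSucc ω) ≤ ξ)).card}) :
    P {ω | ∃ j ≤ J (τ (Fin.last M) ω), γ ω < η j (τ (Fin.last M) ω)}
      ≤ ENNReal.ofReal δ :=
  stac_false_positive_rate_le_general P M τ hτmeas hindep hid J hJmeas d hdmeas hd0 η hη δ hk γ hγ
end

section
/- Let (Ω, F, P) be a probability space and let s¹, …, s^M, s_test : Ω → ℝ be independent and identically distributed real-valued random variables (conformity scores). Let δ ∈ (0,1) satisfy ⌈(M+1)(1−δ)⌉ ≤ M, and define the (random) conformal quantile γ := inf{ξ ∈ ℝ : #{i ∈ {1,…,M} : sⁱ ≤ ξ} ≥ ⌈(M+1)(1−δ)⌉}. Then P(s_test ≤ γ) ≥ 1 − δ. -/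
/- By exchangeability, the probability that the test score has strict rank (the number of scores
strictly below it) less than `k := ⌈(M+1)(1-δ)⌉` is the same for all `M + 1` scores. By
pigeonhole at least `k` of the scores have strict rank less than `k`, so this probability is at
least `k / (M+1) ≥ 1 - δ`. Finally, if fewer than `k` calibration scores lie strictly below the
test score, then every `ξ` having `k` calibration scores `≤ ξ` is at least the test score, hence
so is their infimum `γ`. -/

open MeasureTheory ProbabilityTheory Finset
open scoped ENNReal

lemma natCast_mul_measure_univ_le_sum {ι Ω : Type*} [Fintype ι] [MeasurableSpace Ω]
    (μ : Measure Ω) {A : ι → Set Ω} [∀ j, DecidablePred (· ∈ A j)]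
    (hA : ∀ j, MeasurableSet (A j)) {k : ℕ} (hk : ∀ ω, k ≤ #{j | ω ∈ A j}) :
    k * μ Set.univ ≤ ∑ j, μ (A j) :=
  calc k * μ Set.univ = ∫⁻ _, (k : ℝ≥0∞) ∂μ := (lintegral_const _).symm
    _ ≤ ∫⁻ ω, ∑ j, (A j).indicator 1 ω ∂μ := lintegral_mono fun ω => by
        simpa [Set.indicator_apply, sum_boole] using hk ω
    _ = ∑ j, μ (A j) := by
        rw [lintegral_finsetSum _ fun j _ => measurable_one.indicator (hA j)]
        simp [lintegral_indicator_one (hA _)]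

lemma ProbabilityTheory.iIndepFun.map_fun_eq_pi_of_identDistrib {Ω ι β : Type*} [Fintype ι]
    [MeasurableSpace Ω] [MeasurableSpace β] {P : Measure Ω} [IsProbabilityMeasure P]
    {f : ι → Ω → β} (hindep : iIndepFun f P) {i₀ : ι}
    (hid : ∀ i, IdentDistrib (f i) (f i₀) P P) :
    P.map (fun ω i => f i ω) = Measure.pi fun _ : ι => P.map (f i₀) := by
  rw [(iIndepFun_iff_map_fun_eq_pi_map fun i => (hid i).aemeasurable_fst).1 hindep]
  simp_rw [fun i => (hid i).map_eq]

section StrictRank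

variable {ι α : Type*} [Fintype ι] [LinearOrder α]

lemma strictRank_comp_equiv {ι' : Type*} [Fintype ι'] (x : ι → α) (σ : ι' ≃ ι) (j : ι') :
    strictRank (x ∘ σ) j = strictRank x (σ j) :=
  card_equiv σ (by simp)

lemma strictRank_last {n : ℕ} (x : Fin (n + 1) → α) :
    strictRank x (Fin.last n) = #{i : Fin n | x i.castSucc < x (Fin.last n)} := by
  rw [strictRank, card_filter, card_filter, Fin.sum_univ_castSucc]
  simp

lemma le_card_strictRank_lt (x : ι → α) {k : ℕ} (hk : k ≤ Fintype.card ι) :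
    k ≤ #{j | strictRank x j < k} := by
  classical
  set T : Finset ι := {j | strictRank x j < k}
  by_contra! hT
  have hTc : Tᶜ.Nonempty := by
    rw [nonempty_iff_ne_empty, Ne, compl_eq_empty_iff]
    intro hTuniv
    rw [hTuniv, card_univ] at hT
    omega
  -- a minimal score outside `T` has only scores of `T` strictly below it
  obtain ⟨j, hjT, hj_min⟩ := exists_min_image _ x hTc
  have hbelow : ({i | x i < x j} : Finset ι) ⊆ T := by
    intro i hi
    by_contra hiT
    exact (mem_filter.1 hi).2.not_ge (hj_min i (mem_compl.2 hiT))
  exact mem_compl.1 hjT (mem_filter.2 ⟨mem_univ j, (card_le_card hbelow).trans_lt hT⟩)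

variable [MeasurableSpace α]

lemma measure_pi_strictRank_lt_eq (μ : Measure α) [SigmaFinite μ] (j j' : ι) (k : ℕ) :
    Measure.pi (fun _ : ι => μ) {x | strictRank x j < k} =
      Measure.pi (fun _ : ι => μ) {x | strictRank x j' < k} := by
  classical
  set σ := Equiv.swap j j'
  rw [← (measurePreserving_piCongrLeft (fun _ : ι => μ) σ).measure_preimage_equiv]
  congr 1
  ext x
  simp only [Set.mem_preimage, Set.mem_ofPred_eq, MeasurableEquiv.coe_piCongrLeft]
  calc strictRank (Equiv.piCongrLeft _ σ x) j < k
      ↔ strictRank (Equiv.piCongrLeft _ σ x) (σ j') < k := by rw [Equiv.swap_apply_right]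
    _ ↔ strictRank (Equiv.piCongrLeft _ σ x ∘ σ) j' < k := by rw [strictRank_comp_equiv]
    _ ↔ strictRank x j' < k := by
      congr! 2
      ext i
      exact Equiv.piCongrLeft_apply_apply _ _ _ _

variable [TopologicalSpace α] [OrderClosedTopology α] [SecondCountableTopology α]
  [OpensMeasurableSpace α]

lemma measurableSet_strictRank_lt (j : ι) (k : ℕ) :
    MeasurableSet {x : ι → α | strictRank x j < k} := by
  have hrank : Measurable fun x : ι → α => strictRank x j := by
    simp only [strictRank, card_filter]
    exact Finset.measurable_sum _ fun i _ =>
      Measurable.ite (measurableSet_lt (measurable_pi_apply i) (measurable_pi_apply j))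
        measurable_const measurable_const
  exact measurableSet_lt hrank measurable_const

lemma card_div_le_measure_pi_strictRank_lt (μ : Measure α) [IsProbabilityMeasure μ] {k : ℕ}
    (hk : k ≤ Fintype.card ι) (j : ι) :
    (k : ℝ≥0∞) / Fintype.card ι ≤ Measure.pi (fun _ : ι => μ) {x | strictRank x j < k} := by
  refine ENNReal.div_le_of_le_mul ?_
  have hcount := natCast_mul_measure_univ_le_sum (Measure.pi fun _ : ι => μ)
    (fun j' => measurableSet_strictRank_lt j' k) fun x => le_card_strictRank_lt x hk
  simpa [measure_pi_strictRank_lt_eq μ _ j k, mul_comm] using hcount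

end StrictRank

noncomputable def conformalQuantile {ι : Type*} [Fintype ι] (k : ℕ) (x : ι → ℝ) : ℝ :=
  sInf {ξ | k ≤ #{i | x i ≤ ξ}}

lemma le_conformalQuantile {ι : Type*} [Fintype ι] {k : ℕ} (hk : k ≤ Fintype.card ι)
    {x : ι → ℝ} {y : ℝ} (hy : #{i | x i < y} < k) : y ≤ conformalQuantile k x := by
  obtain ⟨b, hb⟩ := (Set.finite_range x).bddAbove
  refine le_csInf ⟨b, ?_⟩ fun ξ hξ => ?_
  · simpa [filter_true_of_mem fun i _ => hb (Set.mem_range_self i)] using hk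
  · by_contra! hξy
    have hsub : ({i | x i ≤ ξ} : Finset ι) ⊆ ({i | x i < y} : Finset ι) :=
      monotone_filter_right _ fun i _ hi => hi.trans_lt hξy
    exact (hξ.trans (card_le_card hsub)).not_gt hy

theorem conformal_prediction_coverage_general
    {Ω : Type*} [MeasurableSpace Ω] (P : Measure Ω) [IsProbabilityMeasure P]
    (M : ℕ) (s : Fin (M + 1) → Ω → ℝ)
    (hindep : iIndepFun s P)
    (hid : ∀ i j, IdentDistrib (s i) (s j) P P)
    (δ : ℝ)
    (hk : ⌈(M + 1 : ℝ) * (1 - δ)⌉₊ ≤ M) :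
    ENNReal.ofReal (1 - δ) ≤
      P {ω | s (Fin.last M) ω ≤
        sInf {ξ : ℝ | ⌈(M + 1 : ℝ) * (1 - δ)⌉₊ ≤
          (Finset.univ.filter (fun i : Fin M => s i.castSucc ω ≤ ξ)).card}} := by
  set k := ⌈(M + 1 : ℝ) * (1 - δ)⌉₊
  have hmeas : ∀ i, AEMeasurable (s i) P := fun i => (hid i i).aemeasurable_fst
  have : IsProbabilityMeasure (P.map (s (Fin.last M))) :=
    Measure.isProbabilityMeasure_map (hmeas _)
  have hbound : ENNReal.ofReal (1 - δ) ≤ (k : ℝ≥0∞) / (M + 1 : ℕ) := by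
    rw [← ENNReal.ofReal_natCast, ← ENNReal.ofReal_natCast,
      ← ENNReal.ofReal_div_of_pos (by positivity)]
    refine ENNReal.ofReal_le_ofReal ((le_div_iff₀ (by positivity)).2 ?_)
    simpa [mul_comm] using Nat.le_ceil ((M + 1 : ℝ) * (1 - δ))
  have hexch := card_div_le_measure_pi_strictRank_lt (P.map (s (Fin.last M)))
    (by simpa using hk.trans M.le_succ) (Fin.last M)
  rw [Fintype.card_fin, ← hindep.map_fun_eq_pi_of_identDistrib fun i => hid i (Fin.last M),
    Measure.map_apply_of_aemeasurable (aemeasurable_pi_lambda _ hmeas)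
      (measurableSet_strictRank_lt _ _)] at hexch
  refine (hbound.trans hexch).trans (measure_mono fun ω hω => ?_)
  rw [Set.mem_preimage, Set.mem_ofPred_eq, strictRank_last] at hω
  exact le_conformalQuantile (by simpa using hk) hω

/-- split conformal coverage. If `s 0, …, s M` (calibration scores
`s i.castSucc`, `i : Fin M`, and test score `s (Fin.last M)`) are i.i.d. real
random variables, `δ ∈ (0,1)` and `⌈(M+1)(1-δ)⌉ ≤ M`, and `γ ω` is the conformal
quantile `inf {ξ | #{i : s i ω ≤ ξ} ≥ ⌈(M+1)(1-δ)⌉}` of the calibration scores,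
then `P (s_test ≤ γ) ≥ 1 - δ`. -/
theorem conformal_prediction_coverage
    {Ω : Type*} [MeasurableSpace Ω] (P : Measure Ω) [IsProbabilityMeasure P]
    (M : ℕ) (s : Fin (M + 1) → Ω → ℝ)
    (hmeas : ∀ i, Measurable (s i))
    (hindep : iIndepFun s P)
    (hid : ∀ i j, IdentDistrib (s i) (s j) P P)
    (δ : ℝ) (hδ : δ ∈ Set.Ioo (0 : ℝ) 1)
    (hk : ⌈(M + 1 : ℝ) * (1 - δ)⌉₊ ≤ M) :
    ENNReal.ofReal (1 - δ) ≤
      P {ω | s (Fin.last M) ω ≤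
        sInf {ξ : ℝ | ⌈(M + 1 : ℝ) * (1 - δ)⌉₊ ≤
          (Finset.univ.filter (fun i : Fin M => s i.castSucc ω ≤ ξ)).card}} :=
  conformal_prediction_coverage_general P M s hindep hid δ hk
end

section
/- Let (Ω, F, P) be a probability space and let X₁, …, X_{n+1} : Ω → ℝ be independent and identically distributed real-valued random variables such that P(Xᵢ = X_j) = 0 for all i ≠ j (almost surely distinct values). Then the rank of X_{n+1} among the full sample is uniformly distributed on {1, …, n+1}: for every k ∈ {1, …, n+1}, P(#{i ∈ {1,…,n+1} : Xᵢ ≤ X_{n+1}} = k) = 1/(n+1). -/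
/-!
The joint law of an i.i.d. sample is a product measure, hence invariant under permutations of the
coordinates, so the events `{rank of X j = k}` all have the same probability. Almost surely the
sample values are distinct; the rank is then a bijection onto `{1, …, n + 1}`, so exactly one
index has rank `k`, and the `n + 1` events partition a set of full measure.
-/

open MeasureTheory ProbabilityTheory Finset

lemma measurePreserving_comp_perm_pi {ι α : Type*} [Fintype ι] [MeasurableSpace α]
    (ν : Measure α) [SigmaFinite ν] (σ : Equiv.Perm ι) :
    MeasurePreserving (fun x : ι → α => x ∘ σ)
      (Measure.pi fun _ => ν) (Measure.pi fun _ => ν) := by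
  convert measurePreserving_piCongrLeft (fun _ : ι => ν) σ.symm using 1
  funext x i
  rw [MeasurableEquiv.coe_piCongrLeft, ← σ.symm_apply_apply i, Equiv.piCongrLeft_apply_apply,
    σ.symm_apply_apply, Function.comp_apply]

lemma ae_injective_of_pairwise_null {Ω β κ : Type*} [Countable κ] [MeasurableSpace Ω]
    {μ : Measure Ω} {f : κ → Ω → β} (h : ∀ i j, i ≠ j → μ {ω | f i ω = f j ω} = 0) :
    ∀ᵐ ω ∂μ, Function.Injective fun i => f i ω := by
  have : ∀ i j, ∀ᵐ ω ∂μ, f i ω = f j ω → i = j := fun i j => by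
    by_cases hij : i = j
    · exact .of_forall fun _ _ => hij
    · exact (measure_eq_zero_iff_ae_notMem.1 (h i j hij)).mono fun _ hω heq => absurd heq hω
  filter_upwards [ae_all_iff.2 fun i => ae_all_iff.2 (this i)] with ω hω i j using hω i j

namespace SampleRank

variable {ι α : Type*} [Fintype ι] [LinearOrder α]

def rank (x : ι → α) (j : ι) : ℕ := #{i | x i ≤ x j}

lemma rank_comp_perm (x : ι → α) (σ : Equiv.Perm ι) (j : ι) :
    rank (x ∘ σ) j = rank x (σ j) :=
  card_equiv σ fun i => by simp

lemma rank_lt_rank {x : ι → α} {i j : ι} (h : x i < x j) : rank x i < rank x j := by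
  refine card_lt_card ⟨fun a ha => ?_, fun hsub => ?_⟩
  · simp only [mem_filter, mem_univ, true_and] at ha ⊢
    exact ha.trans h.le
  · simpa [h.not_ge] using hsub (mem_filter.2 ⟨mem_univ j, le_rfl⟩)

lemma eq_of_rank_eq {x : ι → α} {i j : ι} (h : rank x i = rank x j) : x i = x j := by
  rcases lt_trichotomy (x i) (x j) with hlt | heq | hgt
  · exact absurd h (rank_lt_rank hlt).ne
  · exact heq
  · exact absurd h (rank_lt_rank hgt).ne'

lemma rank_injective {x : ι → α} (hx : Function.Injective x) : Function.Injective (rank x) :=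
  fun _ _ h => hx (eq_of_rank_eq h)

lemma rank_mem_Icc (x : ι → α) (j : ι) : rank x j ∈ Icc 1 (Fintype.card ι) :=
  mem_Icc.2 ⟨card_pos.2 ⟨j, by simp⟩, card_filter_le _ _⟩

lemma exists_rank_eq {x : ι → α} (hx : Function.Injective x) {k : ℕ}
    (hk : k ∈ Icc 1 (Fintype.card ι)) : ∃ j, rank x j = k := by
  have himage : univ.image (rank x) = Icc 1 (Fintype.card ι) :=
    eq_of_subset_of_card_le (image_subset_iff.2 fun j _ => rank_mem_Icc x j)
      (by simp [card_image_of_injective _ (rank_injective hx)])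
  simpa [← himage] using hk

section Measure

variable [MeasurableSpace α] [TopologicalSpace α] [OrderClosedTopology α]
  [SecondCountableTopology α] [OpensMeasurableSpace α]

lemma measurable_rank (j : ι) : Measurable fun x : ι → α => rank x j := by
  classical
  simp_rw [rank, card_filter]
  exact Finset.measurable_sum _ fun i _ =>
    Measurable.ite (measurableSet_le (measurable_pi_apply i) (measurable_pi_apply j))
      measurable_const measurable_const

lemma measurableSet_rank_eq (j : ι) (k : ℕ) : MeasurableSet {x : ι → α | rank x j = k} :=
  measurable_rank j (measurableSet_singleton k)

theorem measure_rank_eq_of_exchangeable (μ : Measure (ι → α)) [IsProbabilityMeasure μ]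
    (hexch : ∀ σ : Equiv.Perm ι, MeasurePreserving (fun x => x ∘ σ) μ μ)
    (hinj : ∀ᵐ x ∂μ, Function.Injective x) {k : ℕ} (hk : k ∈ Icc 1 (Fintype.card ι)) (j : ι) :
    μ {x | rank x j = k} = 1 / Fintype.card ι := by
  classical
  set S : ι → Set (ι → α) := fun i => {x | rank x i = k}
  have hS : ∀ i, MeasurableSet (S i) := fun i => measurableSet_rank_eq i k
  have hS_eq : ∀ i, μ (S i) = μ (S j) := fun i => by
    have hpre : (fun x => x ∘ Equiv.swap i j) ⁻¹' S i = S j := by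
      ext x
      simp [S, rank_comp_perm]
    rw [← hpre, (hexch _).measure_preimage (hS i).nullMeasurableSet]
  have hnull : μ {x | ¬Function.Injective x} = 0 := ae_iff.1 hinj
  have hdisj : Pairwise (Function.onFun (AEDisjoint μ) S) := fun a b hab =>
    measure_mono_null
      (fun x hx hx_inj => hab (rank_injective hx_inj (hx.1.trans hx.2.symm))) hnull
  have hcover : μ (⋃ i, S i) = 1 := by
    rw [← measure_univ (μ := μ)]
    have hsub : (⋃ i, S i)ᶜ ⊆ {x | ¬Function.Injective x} := fun x hx hx_inj =>
      hx (by simpa [S] using exists_rank_eq hx_inj hk)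
    exact measure_congr (ae_eq_univ.2 (measure_mono_null hsub hnull))
  have hsum : (Fintype.card ι : ENNReal) * μ (S j) = 1 := by
    rw [← hcover, measure_iUnion₀ hdisj fun i => (hS i).nullMeasurableSet, tsum_fintype,
      Finset.sum_congr rfl fun i _ => hS_eq i, sum_const, nsmul_eq_mul, card_univ]
  rw [ENNReal.eq_div_iff (Nat.cast_ne_zero.2 (by have := mem_Icc.1 hk; omega))
    (ENNReal.natCast_ne_top _), hsum]

end Measure

end SampleRank

open SampleRank

/-- rank uniformity. If `X 0, …, X n` are i.i.d. real random
variables that are pairwise almost-surely distinct, then the rank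
`#{i : X i ≤ X (Fin.last n)}` of the last one in the full sample is uniform on
`{1, …, n+1}`. -/
theorem rank_of_last_uniform
    {Ω : Type*} [MeasurableSpace Ω] (P : Measure Ω) [IsProbabilityMeasure P]
    (n : ℕ) (X : Fin (n + 1) → Ω → ℝ)
    (hmeas : ∀ i, Measurable (X i))
    (hindep : iIndepFun X P)
    (hid : ∀ i j, IdentDistrib (X i) (X j) P P)
    (hdistinct : ∀ i j, i ≠ j → P {ω | X i ω = X j ω} = 0)
    (k : ℕ) (hk1 : 1 ≤ k) (hk2 : k ≤ n + 1) :
    P {ω | (Finset.univ.filter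
        (fun i : Fin (n + 1) => X i ω ≤ X (Fin.last n) ω)).card = k}
      = 1 / ((n : ENNReal) + 1) := by
  have hX : Measurable fun ω i => X i ω := measurable_pi_lambda _ hmeas
  set μ := P.map (fun ω i => X i ω) with hμ_def
  have : IsProbabilityMeasure μ := Measure.isProbabilityMeasure_map hX.aemeasurable
  have hμ : μ = Measure.pi fun _ => P.map (X (Fin.last n)) := by
    rw [hμ_def, hindep.map_fun_eq_pi_map fun i => (hmeas i).aemeasurable]
    exact congrArg Measure.pi (funext fun i => (hid i _).map_eq)
  have hinj : ∀ᵐ x ∂μ, Function.Injective x :=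
    ae_injective_of_pairwise_null fun i j hij => by
      rw [Measure.map_apply hX (measurableSet_eq_fun (measurable_pi_apply i)
        (measurable_pi_apply j))]
      exact hdistinct i j hij
  have h := measure_rank_eq_of_exchangeable μ
    (fun σ => hμ ▸ measurePreserving_comp_perm_pi _ σ) hinj
    (mem_Icc.2 ⟨hk1, by simpa using hk2⟩) (Fin.last n)
  rw [hμ_def, Measure.map_apply hX (measurableSet_rank_eq _ k)] at h
  simpa [rank] using h
end
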